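/- arXiv:1604.08372 — 3 statements merged into one kernel-verified Lean document; each statement's English description precedes it below -/
import Mathlib

section
/- Let d ≥ 2 and let v : (0,∞) → ℝ be measurable with: (i) there exist C > 0 and s ∈ (0,2) such that |v(r)| ≤ C·r^{-s} for r ∈ (0,1]; (ii) there exist c > 0, m ∈ (-2,0) and R ≥ 1 such that -(1/c)·r^m ≤ v(r) ≤ -c·r^m for all r ≥ R, and v is bounded on [1, R]. Set V(x) = v(‖x‖) and W(λ) := ∫_{ℝ^d} (λ - V(x))₊^{d/2} dx. Then there exist K ≥ 1 and δ > 0 such that for all λ ∈ (-δ, 0), (1/K)·|λ|^{d(1/2 + 1/m)} ≤ W(λ) ≤ K·|λ|^{d(1/2 + 1/m)}. -/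
open MeasureTheory Set

set_option maxHeartbeats 1000000

private lemma pow_mul_rpow_aux {y : ℝ} (hy : 0 < y) (n : ℕ) (a : ℝ) :
    y ^ n * y ^ a = y ^ ((n : ℝ) + a) := by
  rw [← Real.rpow_natCast y n, ← Real.rpow_add hy]

/-- Proposition 4.1, Case B: `W(λ) = ∫ (λ - V)₊^{d/2} dx ≍ |λ|^{d(1/2+1/m)}` as
`λ → 0⁻`, for a radial potential behaving like `-r^m` (`-2 < m < 0`) at infinity, with
a possible singularity `-r^{-s}` (`0 < s < 2`) at the origin. -/
theorem stmt17 (d : ℕ) (hd : 2 ≤ d) (v : ℝ → ℝ) (hv : Measurable v)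
    (C s : ℝ) (hC : 0 < C) (hs : s ∈ Set.Ioo (0 : ℝ) 2)
    (hsing : ∀ r ∈ Set.Ioc (0 : ℝ) 1, |v r| ≤ C * r ^ (-s))
    (c m R : ℝ) (hc : 0 < c) (hm : m ∈ Set.Ioo (-2 : ℝ) 0) (hR : 1 ≤ R)
    (hdecay : ∀ r ≥ R, -(1 / c) * r ^ m ≤ v r ∧ v r ≤ -c * r ^ m)
    (hbdd : ∃ M : ℝ, ∀ r ∈ Set.Icc (1 : ℝ) R, |v r| ≤ M) :
    ∃ K ≥ (1 : ℝ), ∃ δ > (0 : ℝ), ∀ lam ∈ Set.Ioo (-δ) (0 : ℝ),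
      (1 / K) * |lam| ^ ((d : ℝ) * (1 / 2 + 1 / m)) ≤
        (∫ x : EuclideanSpace ℝ (Fin d), max (lam - v ‖x‖) 0 ^ ((d : ℝ) / 2)) ∧
      (∫ x : EuclideanSpace ℝ (Fin d), max (lam - v ‖x‖) 0 ^ ((d : ℝ) / 2)) ≤
        K * |lam| ^ ((d : ℝ) * (1 / 2 + 1 / m)) := by
  obtain ⟨M, hM⟩ := hbdd
  obtain ⟨hs0, hs2⟩ := hs
  obtain ⟨hm2, hm0⟩ := hm
  have hmne : m ≠ 0 := ne_of_lt hm0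
  have hd1 : 1 ≤ d := by omega
  have hdR : (2 : ℝ) ≤ (d : ℝ) := by exact_mod_cast hd
  have hdpos : (0 : ℝ) < (d : ℝ) := by linarith
  have hR0 : (0 : ℝ) < R := lt_of_lt_of_le one_pos hR
  have hM0 : 0 ≤ M := le_trans (abs_nonneg _) (hM 1 ⟨le_refl 1, hR⟩)
  set κ : ℝ := (d : ℝ) * (1 / 2 + 1 / m) with hκdef
  have hκ : κ = (d : ℝ) / m + (d : ℝ) / 2 := by
    rw [hκdef]; field_simp; ring
  have hκneg : κ < 0 := by
    have h1m : 1 / m < -(1 / 2) := by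
      rw [div_lt_iff_of_neg hm0]; linarith
    have : 1 / 2 + 1 / m < 0 := by linarith
    exact mul_neg_of_pos_of_neg hdpos this
  set e1 : ℝ := ((d : ℝ) - 1) + (-s * ((d : ℝ) / 2)) with he1def
  have he1 : -1 < e1 := by
    have h := mul_pos hdpos (by linarith : (0 : ℝ) < 2 - s)
    rw [he1def]; linarith
  set e2 : ℝ := ((d : ℝ) - 1) + (m * ((d : ℝ) / 2)) with he2def
  have he2 : -1 < e2 := by
    have h := mul_pos hdpos (by linarith : (0 : ℝ) < 2 + m)
    rw [he2def]; linarith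
  have he2κ : (1 / m) * (e2 + 1) = κ := by
    rw [hκ, he2def]; field_simp; ring
  -- the constants
  set A1 : ℝ := ∫ y in Ioc (0 : ℝ) 1, C ^ ((d : ℝ) / 2) * y ^ e1 with hA1def
  have hA1nn : 0 ≤ A1 := by
    apply setIntegral_nonneg measurableSet_Ioc
    intro y hy
    have : (0:ℝ) ≤ y ^ e1 := Real.rpow_nonneg hy.1.le _
    positivity
  set A2 : ℝ := ∫ _y in Ioc (1 : ℝ) R, R ^ (d - 1) * M ^ ((d : ℝ) / 2) with hA2def
  have hA2nn : 0 ≤ A2 := by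
    apply setIntegral_nonneg measurableSet_Ioc
    intro y _
    have : (0:ℝ) ≤ M ^ ((d : ℝ) / 2) := Real.rpow_nonneg hM0 _
    positivity
  set A3 : ℝ := (1 / c) ^ ((d : ℝ) / 2) * c ^ κ / (e2 + 1) with hA3def
  have hA3nn : 0 ≤ A3 := by
    have h1 : (0:ℝ) < (1 / c) ^ ((d : ℝ) / 2) := Real.rpow_pos_of_pos (by positivity) _
    have h2 : (0:ℝ) < c ^ κ := Real.rpow_pos_of_pos hc _
    have h3 : (0:ℝ) < e2 + 1 := by linarith
    positivity
  set c₁ : ℝ := (1 / 2 : ℝ) ^ d * (2 / c) ^ ((d : ℝ) / m) with hc₁def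
  have hc₁pos : 0 < c₁ := by
    have : (0:ℝ) < (2 / c) ^ ((d : ℝ) / m) := Real.rpow_pos_of_pos (by positivity) _
    positivity
  -- the volume constant
  have : Nontrivial (EuclideanSpace ℝ (Fin d)) := by
    apply Module.nontrivial_of_finrank_pos (R := ℝ)
    rw [finrank_euclideanSpace_fin]; omega
  set V1 : ℝ := (volume (Metric.ball (0 : EuclideanSpace ℝ (Fin d)) 1)).toReal with hV1def
  have hV1 : 0 < V1 := by
    rw [hV1def]
    exact ENNReal.toReal_pos (ne_of_gt (Metric.measure_ball_pos _ _ one_pos))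
      (ne_of_lt measure_ball_lt_top)
  set CL : ℝ := (d : ℝ) * V1 * c₁ with hCLdef
  have hCLpos : 0 < CL := by positivity
  set CU : ℝ := (d : ℝ) * V1 * (A1 + A2 + A3) with hCUdef
  refine ⟨max (max (1 / CL) CU) 1, le_max_right _ _,
    min (min (c * (2 * R) ^ m / 2) (R ^ m / c)) 1, ?_, ?_⟩
  · have h1 : (0:ℝ) < (2 * R) ^ m := Real.rpow_pos_of_pos (by positivity) _
    have h2 : (0:ℝ) < R ^ m := Real.rpow_pos_of_pos hR0 _
    positivity
  intro lam hlam
  set K : ℝ := max (max (1 / CL) CU) 1 with hKdef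
  have hKpos : (0:ℝ) < K := lt_of_lt_of_le one_pos (le_max_right _ _)
  obtain ⟨hlam1, hlam2⟩ := hlam
  have hl0 : 0 < |lam| := abs_pos.2 (ne_of_lt hlam2)
  have hlabs : |lam| = -lam := abs_of_neg hlam2
  have hlδ1 : |lam| ≤ 1 := by
    rw [hlabs]
    have := min_le_right (min (c * (2 * R) ^ m / 2) (R ^ m / c)) 1
    linarith
  have hlδa : |lam| < c * (2 * R) ^ m / 2 := by
    rw [hlabs]
    have := le_trans (min_le_left (min (c * (2 * R) ^ m / 2) (R ^ m / c)) 1)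
      (min_le_left (c * (2 * R) ^ m / 2) (R ^ m / c))
    linarith
  have hlδb : |lam| < R ^ m / c := by
    rw [hlabs]
    have := le_trans (min_le_left (min (c * (2 * R) ^ m / 2) (R ^ m / c)) 1)
      (min_le_right (c * (2 * R) ^ m / 2) (R ^ m / c))
    linarith
  set ρ : ℝ := (c * |lam|) ^ (1 / m) with hρdef
  set r : ℝ := (2 * |lam| / c) ^ (1 / m) with hrdef
  have hclpos : 0 < c * |lam| := mul_pos hc hl0
  have hρpos : 0 < ρ := Real.rpow_pos_of_pos hclpos _
  have hrbase : 0 < 2 * |lam| / c := by positivity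
  have hrpos : 0 < r := Real.rpow_pos_of_pos hrbase _
  have h1mneg : 1 / m ≤ 0 := by
    apply le_of_lt
    exact div_neg_of_pos_of_neg one_pos hm0
  have hρR : R ≤ ρ := by
    have h1 : c * |lam| ≤ R ^ m := by
      have h := (lt_div_iff₀ hc).1 hlδb
      linarith
    calc R = (R ^ m) ^ (1 / m) := by
          rw [← Real.rpow_mul hR0.le, mul_one_div, div_self hmne, Real.rpow_one]
      _ ≤ ρ := Real.rpow_le_rpow_of_nonpos hclpos h1 h1mneg
  have hr2R : 2 * R ≤ r := by
    have h1 : 2 * |lam| / c ≤ (2 * R) ^ m := by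
      rw [div_le_iff₀ hc]
      linarith
    calc 2 * R = ((2 * R) ^ m) ^ (1 / m) := by
          rw [← Real.rpow_mul (by positivity : (0:ℝ) ≤ 2 * R), mul_one_div, div_self hmne,
            Real.rpow_one]
      _ ≤ r := Real.rpow_le_rpow_of_nonpos hrbase h1 h1mneg
  have h1ρ : (1 : ℝ) ≤ ρ := le_trans hR hρR
  -- the radial profile
  set f : ℝ → ℝ := fun t => max (lam - v t) 0 ^ ((d : ℝ) / 2) with hfdef
  set g : ℝ → ℝ := fun y => y ^ (d - 1) * f y with hgdef
  have hfmeas : Measurable f :=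
    (Real.continuous_rpow_const (by positivity : (0:ℝ) ≤ (d : ℝ) / 2)).measurable.comp
      ((measurable_const.sub hv).max measurable_const)
  have hgmeas : Measurable g := (measurable_id.pow_const _).mul hfmeas
  have hfnn : ∀ t, 0 ≤ f t := fun t => Real.rpow_nonneg (le_max_right _ _) _
  have hgnn : ∀ y : ℝ, 0 < y → 0 ≤ g y := fun y hy =>
    mul_nonneg (pow_nonneg hy.le _) (hfnn y)
  have fle : ∀ t b : ℝ, lam - v t ≤ b → 0 ≤ b → f t ≤ b ^ ((d : ℝ) / 2) := fun t b h hb =>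
    Real.rpow_le_rpow (le_max_right _ _) (max_le h hb) (by positivity)
  have fge : ∀ t b : ℝ, 0 ≤ b → b ≤ lam - v t → b ^ ((d : ℝ) / 2) ≤ f t := fun t b hb h =>
    Real.rpow_le_rpow hb (le_trans h (le_max_left _ _)) (by positivity)
  -- vanishing beyond ρ
  have hg0 : ∀ y ∈ Ioi ρ, g y = 0 := by
    intro y hy
    have hyρ : ρ < y := hy
    have hyR : R ≤ y := le_trans hρR hyρ.le
    have hym : y ^ m < c * |lam| := by
      calc y ^ m < ρ ^ m := Real.rpow_lt_rpow_of_neg hρpos hyρ hm0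
        _ = c * |lam| := by
            rw [hρdef, ← Real.rpow_mul hclpos.le, one_div_mul_cancel hmne, Real.rpow_one]
    have hvy := (hdecay y hyR).1
    have hneg : lam - v y < 0 := by
      have h2 : (1 / c) * y ^ m < |lam| := by
        have := (mul_lt_mul_iff_right₀ (by positivity : (0:ℝ) < 1 / c)).2 hym
        have he : (1 / c) * (c * |lam|) = |lam| := by field_simp
        linarith [he ▸ this]
      rw [hlabs] at h2
      linarith
    have hmax : max (lam - v y) 0 = 0 := max_eq_right hneg.le
    show y ^ (d - 1) * f y = 0
    have : f y = 0 := by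
      show max (lam - v y) 0 ^ ((d : ℝ) / 2) = 0
      rw [hmax, Real.zero_rpow (by positivity : (0:ℝ) < (d : ℝ) / 2).ne']
    rw [this, mul_zero]
  -- pointwise bound near zero
  have hgb1 : ∀ y ∈ Ioc (0 : ℝ) 1, g y ≤ C ^ ((d : ℝ) / 2) * y ^ e1 := by
    intro y hy
    obtain ⟨hy0, hy1⟩ := hy
    have hfb : f y ≤ C ^ ((d : ℝ) / 2) * y ^ (-s * ((d : ℝ) / 2)) := by
      have h1 : lam - v y ≤ C * y ^ (-s) := by
        have h2 := hsing y ⟨hy0, hy1⟩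
        have h3 := neg_abs_le (v y)
        linarith
      calc f y ≤ (C * y ^ (-s)) ^ ((d : ℝ) / 2) :=
            fle _ _ h1 (by positivity)
        _ = C ^ ((d : ℝ) / 2) * (y ^ (-s)) ^ ((d : ℝ) / 2) :=
            Real.mul_rpow hC.le (Real.rpow_nonneg hy0.le _)
        _ = C ^ ((d : ℝ) / 2) * y ^ (-s * ((d : ℝ) / 2)) := by
            rw [← Real.rpow_mul hy0.le]
    calc g y = y ^ (d - 1) * f y := rfl
      _ ≤ y ^ (d - 1) * (C ^ ((d : ℝ) / 2) * y ^ (-s * ((d : ℝ) / 2))) :=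
          mul_le_mul_of_nonneg_left hfb (pow_nonneg hy0.le _)
      _ = C ^ ((d : ℝ) / 2) * (y ^ (d - 1) * y ^ (-s * ((d : ℝ) / 2))) := by ring
      _ = C ^ ((d : ℝ) / 2) * y ^ e1 := by
          rw [pow_mul_rpow_aux hy0]
          congr 1
          rw [he1def]
          congr 1
          push_cast [Nat.cast_sub hd1]
          ring
  -- integrability pieces
  have hInt1 : IntegrableOn g (Ioc 0 1) := by
    have hmaj : IntegrableOn (fun y : ℝ => C ^ ((d : ℝ) / 2) * y ^ e1) (Ioc 0 1) := by
      have h := (intervalIntegral.integrableOn_Ioo_rpow_iff (s := e1) one_pos).2 he1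
      exact ((integrableOn_Ioc_iff_integrableOn_Ioo (by simp)).2 h).const_mul _
    refine Integrable.mono hmaj hgmeas.aestronglyMeasurable ?_
    filter_upwards [ae_restrict_mem measurableSet_Ioc] with y hy
    rw [Real.norm_eq_abs, Real.norm_eq_abs, abs_of_nonneg (hgnn y hy.1),
      abs_of_nonneg (mul_nonneg (Real.rpow_nonneg hC.le _) (Real.rpow_nonneg hy.1.le _))]
    exact hgb1 y hy
  set B : ℝ := max M ((1 / c) * R ^ m) with hBdef
  have hB0 : 0 ≤ B := le_trans hM0 (le_max_left _ _)
  have hgb2 : ∀ y ∈ Ioc (1 : ℝ) ρ, g y ≤ ρ ^ (d - 1) * B ^ ((d : ℝ) / 2) := by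
    intro y hy
    obtain ⟨hy1, hyρ⟩ := hy
    have hy0 : (0:ℝ) < y := lt_trans one_pos hy1
    have hfb : f y ≤ B ^ ((d : ℝ) / 2) := by
      rcases le_or_gt y R with hyR | hyR
      · refine fle _ _ ?_ hB0
        have h2 := hM y ⟨hy1.le, hyR⟩
        have h3 := neg_abs_le (v y)
        have : M ≤ B := le_max_left _ _
        linarith
      · refine fle _ _ ?_ hB0
        have h2 := (hdecay y hyR.le).1
        have h3 : y ^ m ≤ R ^ m := Real.rpow_le_rpow_of_nonpos hR0 hyR.le hm0.le
        have h4 : (1 / c) * y ^ m ≤ (1 / c) * R ^ m :=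
          mul_le_mul_of_nonneg_left h3 (by positivity)
        have h5 : (1 / c) * R ^ m ≤ B := le_max_right _ _
        linarith
    calc g y = y ^ (d - 1) * f y := rfl
      _ ≤ ρ ^ (d - 1) * B ^ ((d : ℝ) / 2) :=
          mul_le_mul (pow_le_pow_left₀ hy0.le hyρ _) hfb (hfnn y) (pow_nonneg hρpos.le _)
  have hInt2 : IntegrableOn g (Ioc 1 ρ) := by
    apply Measure.integrableOn_of_bounded (M := ρ ^ (d - 1) * B ^ ((d : ℝ) / 2))
    · rw [Real.volume_Ioc]; exact ENNReal.ofReal_ne_top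
    · exact hgmeas.aestronglyMeasurable
    · filter_upwards [ae_restrict_mem measurableSet_Ioc] with y hy
      rw [Real.norm_eq_abs, abs_of_nonneg (hgnn y (lt_trans one_pos hy.1))]
      exact hgb2 y hy
  have hInt3 : IntegrableOn g (Ioi ρ) := by
    exact (integrableOn_zero : IntegrableOn (fun _ : ℝ => (0:ℝ)) (Ioi ρ) volume).congr_fun
      (fun y hy => (hg0 y hy).symm) measurableSet_Ioi
  have hIntρ : IntegrableOn g (Ioc 0 ρ) := by
    rw [← Ioc_union_Ioc_eq_Ioc zero_le_one h1ρ]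
    exact hInt1.union hInt2
  have hInt : IntegrableOn g (Ioi 0) := by
    rw [← Ioc_union_Ioi_eq_Ioi hρpos.le]
    exact hIntρ.union hInt3
  -- splitting the integral
  have hI0 : ∫ y in Ioi ρ, g y = 0 := setIntegral_eq_zero_of_forall_eq_zero hg0
  have hIntR : IntegrableOn g (Ioc 0 R) := hIntρ.mono_set (Ioc_subset_Ioc_right hρR)
  have hIntRρ : IntegrableOn g (Ioc R ρ) := hInt2.mono_set (Ioc_subset_Ioc_left hR)
  have hInt1R : IntegrableOn g (Ioc 1 R) := hIntR.mono_set (Ioc_subset_Ioc_left zero_le_one)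
  have hsplit : ∫ y in Ioi 0, g y =
      (∫ y in Ioc 0 1, g y) + (∫ y in Ioc 1 R, g y) + (∫ y in Ioc R ρ, g y) := by
    have d3 : ∫ y in Ioi (0:ℝ), g y = (∫ y in Ioc 0 ρ, g y) + ∫ y in Ioi ρ, g y := by
      rw [← Ioc_union_Ioi_eq_Ioi hρpos.le,
        setIntegral_union Ioc_disjoint_Ioi_same measurableSet_Ioi hIntρ hInt3]
    have d1 : ∫ y in Ioc (0:ℝ) ρ, g y = (∫ y in Ioc 0 R, g y) + ∫ y in Ioc R ρ, g y := by
      rw [← Ioc_union_Ioc_eq_Ioc (le_of_lt hR0) hρR,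
        setIntegral_union (Ioc_disjoint_Ioc_of_le le_rfl) measurableSet_Ioc hIntR hIntRρ]
    have d2 : ∫ y in Ioc (0:ℝ) R, g y = (∫ y in Ioc 0 1, g y) + ∫ y in Ioc 1 R, g y := by
      rw [← Ioc_union_Ioc_eq_Ioc zero_le_one hR,
        setIntegral_union (Ioc_disjoint_Ioc_of_le le_rfl) measurableSet_Ioc
          (hIntR.mono_set (Ioc_subset_Ioc_right hR)) hInt1R]
    rw [d3, hI0, add_zero, d1, d2]
  -- upper bounds
  have hIu1 : ∫ y in Ioc (0:ℝ) 1, g y ≤ A1 := by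
    rw [hA1def]
    refine setIntegral_mono_on hInt1 ?_ measurableSet_Ioc hgb1
    have h := (intervalIntegral.integrableOn_Ioo_rpow_iff (s := e1) one_pos).2 he1
    exact ((integrableOn_Ioc_iff_integrableOn_Ioo (by simp)).2 h).const_mul _
  have hIu2 : ∫ y in Ioc (1:ℝ) R, g y ≤ A2 := by
    rw [hA2def]
    refine setIntegral_mono_on hInt1R ?_ measurableSet_Ioc ?_
    · exact integrableOn_const (by rw [Real.volume_Ioc]; exact ENNReal.ofReal_ne_top)
    · intro y hy
      obtain ⟨hy1, hyR⟩ := hy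
      have hy0 : (0:ℝ) < y := lt_trans one_pos hy1
      have hfb : f y ≤ M ^ ((d : ℝ) / 2) := by
        refine fle _ _ ?_ hM0
        have h2 := hM y ⟨hy1.le, hyR⟩
        have h3 := neg_abs_le (v y)
        linarith
      calc g y = y ^ (d - 1) * f y := rfl
        _ ≤ R ^ (d - 1) * M ^ ((d : ℝ) / 2) :=
            mul_le_mul (pow_le_pow_left₀ hy0.le hyR _) hfb (hfnn y) (pow_nonneg hR0.le _)
  have hgb3 : ∀ y ∈ Ioc R ρ, g y ≤ (1 / c) ^ ((d : ℝ) / 2) * y ^ e2 := by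
    intro y hy
    obtain ⟨hyR, hyρ⟩ := hy
    have hy0 : (0:ℝ) < y := lt_of_lt_of_le hR0 hyR.le
    have hfb : f y ≤ (1 / c) ^ ((d : ℝ) / 2) * y ^ (m * ((d : ℝ) / 2)) := by
      have h1 : lam - v y ≤ (1 / c) * y ^ m := by
        have h2 := (hdecay y hyR.le).1
        linarith
      calc f y ≤ ((1 / c) * y ^ m) ^ ((d : ℝ) / 2) := by
            refine fle _ _ h1 ?_
            have : (0:ℝ) < y ^ m := Real.rpow_pos_of_pos hy0 _
            positivity
        _ = (1 / c) ^ ((d : ℝ) / 2) * (y ^ m) ^ ((d : ℝ) / 2) :=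
            Real.mul_rpow (by positivity) (Real.rpow_nonneg hy0.le _)
        _ = (1 / c) ^ ((d : ℝ) / 2) * y ^ (m * ((d : ℝ) / 2)) := by
            rw [← Real.rpow_mul hy0.le]
    calc g y = y ^ (d - 1) * f y := rfl
      _ ≤ y ^ (d - 1) * ((1 / c) ^ ((d : ℝ) / 2) * y ^ (m * ((d : ℝ) / 2))) :=
          mul_le_mul_of_nonneg_left hfb (pow_nonneg hy0.le _)
      _ = (1 / c) ^ ((d : ℝ) / 2) * (y ^ (d - 1) * y ^ (m * ((d : ℝ) / 2))) := by ring
      _ = (1 / c) ^ ((d : ℝ) / 2) * y ^ e2 := by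
          rw [pow_mul_rpow_aux hy0]
          congr 1
          rw [he2def]
          congr 1
          push_cast [Nat.cast_sub hd1]
          ring
  have hmaj2Int : IntegrableOn (fun y : ℝ => y ^ e2) (Ioc 0 ρ) :=
    (integrableOn_Ioc_iff_integrableOn_Ioo (by simp)).2 ((intervalIntegral.integrableOn_Ioo_rpow_iff hρpos).2 he2)
  have hIu3 : ∫ y in Ioc R ρ, g y ≤ A3 * |lam| ^ κ := by
    have step1 : ∫ y in Ioc R ρ, g y ≤
        ∫ y in Ioc R ρ, (1 / c) ^ ((d : ℝ) / 2) * y ^ e2 := by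
      refine setIntegral_mono_on hIntRρ ?_ measurableSet_Ioc hgb3
      exact (hmaj2Int.mono_set (Ioc_subset_Ioc_left hR0.le)).const_mul _
    have step2 : ∫ y in Ioc R ρ, (1 / c) ^ ((d : ℝ) / 2) * y ^ e2 ≤
        (1 / c) ^ ((d : ℝ) / 2) * ∫ y in Ioc 0 ρ, y ^ e2 := by
      rw [integral_const_mul]
      refine mul_le_mul_of_nonneg_left ?_ (by positivity)
      refine setIntegral_mono_set hmaj2Int ?_ (HasSubset.Subset.eventuallyLE
        (Ioc_subset_Ioc_left hR0.le))
      filter_upwards [ae_restrict_mem measurableSet_Ioc] with y hy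
      exact Real.rpow_nonneg hy.1.le _
    have step3 : ∫ y in Ioc (0:ℝ) ρ, y ^ e2 = ρ ^ (e2 + 1) / (e2 + 1) := by
      rw [← intervalIntegral.integral_of_le hρpos.le,
        integral_rpow (Or.inl he2), Real.zero_rpow (by linarith : (0:ℝ) < e2 + 1).ne']
      ring
    have step4 : ρ ^ (e2 + 1) = c ^ κ * |lam| ^ κ := by
      rw [hρdef, ← Real.rpow_mul hclpos.le, he2κ]
      exact Real.mul_rpow hc.le (abs_nonneg _)
    rw [step3, step4] at step2
    calc ∫ y in Ioc R ρ, g y ≤ (1 / c) ^ ((d : ℝ) / 2) * (c ^ κ * |lam| ^ κ / (e2 + 1)) :=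
          le_trans step1 step2
      _ = A3 * |lam| ^ κ := by rw [hA3def]; ring
  have honeκ : 1 ≤ |lam| ^ κ :=
    Real.one_le_rpow_of_pos_of_le_one_of_nonpos hl0 hlδ1 hκneg.le
  have hupper : ∫ y in Ioi (0:ℝ), g y ≤ (A1 + A2 + A3) * |lam| ^ κ := by
    rw [hsplit]
    have e1 : A1 ≤ A1 * |lam| ^ κ := le_mul_of_one_le_right hA1nn honeκ
    have e2 : A2 ≤ A2 * |lam| ^ κ := le_mul_of_one_le_right hA2nn honeκ
    linarith [hIu1, hIu2, hIu3]
  -- lower bound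
  have hrhalf : R ≤ r / 2 := by linarith
  have hrhalfpos : (0:ℝ) < r / 2 := lt_of_lt_of_le hR0 hrhalf
  have hsub : Icc (r / 2) r ⊆ Ioi (0 : ℝ) := fun y hy => lt_of_lt_of_le hrhalfpos hy.1
  have hstep : ∀ y ∈ Icc (r / 2) r, (r / 2) ^ (d - 1) * |lam| ^ ((d : ℝ) / 2) ≤ g y := by
    intro y hy
    have hy0 : 0 < y := hsub hy
    have hyR : R ≤ y := le_trans hrhalf hy.1
    have hym : 2 * |lam| / c ≤ y ^ m := by
      calc 2 * |lam| / c = r ^ m := by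
            rw [hrdef, ← Real.rpow_mul hrbase.le, one_div_mul_cancel hmne, Real.rpow_one]
        _ ≤ y ^ m := Real.rpow_le_rpow_of_nonpos hy0 hy.2 hm0.le
    have hv2 := (hdecay y hyR).2
    have hcy : 2 * |lam| ≤ c * y ^ m := by
      rw [div_le_iff₀ hc] at hym
      linarith
    have hfl : |lam| ≤ lam - v y := by
      have hle : lam = -|lam| := by rw [hlabs]; ring
      linarith
    have hfge : |lam| ^ ((d : ℝ) / 2) ≤ f y := fge _ _ (abs_nonneg _) hfl
    calc (r / 2) ^ (d - 1) * |lam| ^ ((d : ℝ) / 2)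
        ≤ y ^ (d - 1) * f y :=
          mul_le_mul (pow_le_pow_left₀ hrhalfpos.le hy.1 _) hfge
            (Real.rpow_nonneg (abs_nonneg _) _) (pow_nonneg hy0.le _)
      _ = g y := rfl
  have hico := setIntegral_ge_of_const_le (μ := volume) measurableSet_Icc
    (by rw [Real.volume_Icc]; exact ENNReal.ofReal_ne_top) hstep (hInt.mono_set hsub)
  have hvol : (volume (Icc (r / 2) r)).toReal = r / 2 := by
    rw [Real.volume_Icc, ENNReal.toReal_ofReal (by linarith)]
    ring
  rw [measureReal_def, hvol, smul_eq_mul, mul_comm (r / 2)] at hico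
  have hmono : ∫ y in Icc (r / 2) r, g y ≤ ∫ y in Ioi (0:ℝ), g y := by
    refine setIntegral_mono_set hInt ?_ (HasSubset.Subset.eventuallyLE hsub)
    filter_upwards [ae_restrict_mem measurableSet_Ioi] with y hy
    exact hgnn y hy
  have hrd : r ^ d = (2 / c) ^ ((d : ℝ) / m) * |lam| ^ ((d : ℝ) / m) := by
    rw [hrdef, ← Real.rpow_natCast ((2 * |lam| / c) ^ (1 / m)) d,
      ← Real.rpow_mul hrbase.le,
      show (1 / m) * (d : ℝ) = (d : ℝ) / m from by ring,
      show 2 * |lam| / c = (2 / c) * |lam| from by ring]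
    exact Real.mul_rpow (by positivity) (abs_nonneg _)
  have hkey : (r / 2) ^ (d - 1) * |lam| ^ ((d : ℝ) / 2) * (r / 2) = c₁ * |lam| ^ κ := by
    have h1 : (r / 2) ^ (d - 1) * |lam| ^ ((d : ℝ) / 2) * (r / 2)
        = (r / 2) ^ d * |lam| ^ ((d : ℝ) / 2) := by
      rw [mul_right_comm, ← pow_succ, Nat.sub_add_cancel hd1]
    have h2 : (r / 2 : ℝ) ^ d = (1 / 2 : ℝ) ^ d * r ^ d := by
      rw [div_pow, div_pow]
      ring
    rw [h1, h2, hrd, hc₁def]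
    rw [show (1 / 2 : ℝ) ^ d * ((2 / c) ^ ((d : ℝ) / m) * |lam| ^ ((d : ℝ) / m)) *
        |lam| ^ ((d : ℝ) / 2) = (1 / 2 : ℝ) ^ d * (2 / c) ^ ((d : ℝ) / m) *
        (|lam| ^ ((d : ℝ) / m) * |lam| ^ ((d : ℝ) / 2)) from by ring]
    rw [← Real.rpow_add hl0, ← hκ]
  have hlow : c₁ * |lam| ^ κ ≤ ∫ y in Ioi (0:ℝ), g y := by
    calc c₁ * |lam| ^ κ = (r / 2) ^ (d - 1) * |lam| ^ ((d : ℝ) / 2) * (r / 2) := hkey.symm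
      _ ≤ ∫ y in Icc (r / 2) r, g y := hico
      _ ≤ ∫ y in Ioi (0:ℝ), g y := hmono
  -- pass to the Euclidean integral
  have hW : (∫ x : EuclideanSpace ℝ (Fin d), max (lam - v ‖x‖) 0 ^ ((d : ℝ) / 2))
      = (d : ℝ) * (V1 * ∫ y in Ioi (0:ℝ), g y) := by
    have h := integral_fun_norm_addHaar (volume : Measure (EuclideanSpace ℝ (Fin d))) f
    rw [finrank_euclideanSpace_fin] at h
    calc (∫ x : EuclideanSpace ℝ (Fin d), max (lam - v ‖x‖) 0 ^ ((d : ℝ) / 2))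
        = ∫ x : EuclideanSpace ℝ (Fin d), f ‖x‖ := by simp only [hfdef]
      _ = d • (volume (Metric.ball (0 : EuclideanSpace ℝ (Fin d)) 1)).toReal •
            ∫ y in Ioi (0:ℝ), y ^ (d - 1) • f y := h
      _ = (d : ℝ) * (V1 * ∫ y in Ioi (0:ℝ), g y) := by
          rw [nsmul_eq_mul, smul_eq_mul, ← hV1def]
          congr 2
  have hrpownn : (0:ℝ) ≤ |lam| ^ κ := Real.rpow_nonneg (abs_nonneg _) _
  constructor
  · have hKinv : 1 / K ≤ CL := by
      rw [div_le_iff₀ hKpos]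
      have h1 : 1 / CL ≤ K := le_trans (le_max_left _ _) (le_max_left _ _)
      calc (1:ℝ) = CL * (1 / CL) := by field_simp
        _ ≤ CL * K := mul_le_mul_of_nonneg_left h1 hCLpos.le
    calc (1 / K) * |lam| ^ κ ≤ CL * |lam| ^ κ :=
          mul_le_mul_of_nonneg_right hKinv hrpownn
      _ = (d : ℝ) * (V1 * (c₁ * |lam| ^ κ)) := by rw [hCLdef]; ring
      _ ≤ (d : ℝ) * (V1 * ∫ y in Ioi (0:ℝ), g y) := by
          refine mul_le_mul_of_nonneg_left ?_ hdpos.le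
          exact mul_le_mul_of_nonneg_left hlow hV1.le
      _ = _ := hW.symm
  · have hKU : CU ≤ K := le_trans (le_max_right _ _) (le_max_left _ _)
    calc (∫ x : EuclideanSpace ℝ (Fin d), max (lam - v ‖x‖) 0 ^ ((d : ℝ) / 2))
        = (d : ℝ) * (V1 * ∫ y in Ioi (0:ℝ), g y) := hW
      _ ≤ (d : ℝ) * (V1 * ((A1 + A2 + A3) * |lam| ^ κ)) := by
          refine mul_le_mul_of_nonneg_left ?_ hdpos.le
          exact mul_le_mul_of_nonneg_left hupper hV1.le
      _ = CU * |lam| ^ κ := by rw [hCUdef]; ring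
      _ ≤ K * |lam| ^ κ := mul_le_mul_of_nonneg_right hKU hrpownn
end

section
/- Let d ≥ 2, s ∈ (0,2), C > 0 and ε > 0, and let V : ℝ^d → ℝ be measurable with V(x) ≥ -C·‖x‖^{-s} for all x with 0 < ‖x‖ ≤ ε. Then there exists Ĉ > 0 such that for every λ ≥ 0, ∫_{B(0,ε)} (λ - V(x))₊^{d/2} dx ≤ Ĉ·(1 + λ^{d/2}); in particular this integral is finite. -/
/-!
On the punctured ball the lower bound on `V` gives `(λ - V)₊ ≤ λ + C‖x‖^{-s}`, hence
`(λ - V)₊^{d/2} ≤ 2^{d/2} (λ^{d/2} + C^{d/2} ‖x‖^{-sd/2})`. Since `s d/2 < d`, the singular term is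
integrable on the ball, so the Weyl integral over the ball is at most
`2^{d/2} (λ^{d/2} |B(0,ε)| + C^{d/2} ∫_{B(0,ε)} ‖x‖^{-sd/2} dx)`.
-/

open MeasureTheory Metric

lemma Real.add_rpow_le_two_rpow_mul_rpow_add_rpow {a b p : ℝ} (ha : 0 ≤ a) (hb : 0 ≤ b)
    (hp : 0 ≤ p) : (a + b) ^ p ≤ 2 ^ p * (a ^ p + b ^ p) := calc
  (a + b) ^ p ≤ (2 * max a b) ^ p := by
    rw [two_mul]; gcongr <;> simp
  _ = 2 ^ p * max a b ^ p := Real.mul_rpow zero_le_two (le_max_of_le_left ha)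
  _ ≤ 2 ^ p * (a ^ p + b ^ p) := by
    gcongr
    rcases le_total a b with h | h
    · rw [max_eq_right h]; exact le_add_of_nonneg_left (by positivity)
    · rw [max_eq_left h]; exact le_add_of_nonneg_right (by positivity)

lemma max_sub_rpow_le_of_neg_mul_rpow_le {lam v C r s q : ℝ} (hlam : 0 ≤ lam) (hC : 0 ≤ C)
    (hr : 0 ≤ r) (hq : 0 ≤ q) (hv : -C * r ^ (-s) ≤ v) :
    max (lam - v) 0 ^ q ≤ 2 ^ q * (lam ^ q + C ^ q * r ^ (-(s * q))) := by
  have hCr : 0 ≤ C * r ^ (-s) := by positivity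
  calc max (lam - v) 0 ^ q ≤ (lam + C * r ^ (-s)) ^ q := by
        gcongr
        exact max_le (by linarith) (by positivity)
    _ ≤ 2 ^ q * (lam ^ q + (C * r ^ (-s)) ^ q) :=
        Real.add_rpow_le_two_rpow_mul_rpow_add_rpow hlam hCr hq
    _ = 2 ^ q * (lam ^ q + C ^ q * r ^ (-(s * q))) := by
        rw [Real.mul_rpow hC (by positivity), ← Real.rpow_mul hr, neg_mul]

section NormedSpace

variable {E : Type*} [NormedAddCommGroup E] [NormedSpace ℝ E] [FiniteDimensional ℝ E]
  [MeasurableSpace E] [BorelSpace E] {μ : Measure E} [μ.IsAddHaarMeasure]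

lemma integrableOn_ball_norm_rpow_neg (hdim : 1 ≤ Module.finrank ℝ E) {p : ℝ}
    (hp : p < Module.finrank ℝ E) (r : ℝ) :
    IntegrableOn (fun x : E ↦ ‖x‖ ^ (-p)) (ball 0 r) μ :=
  integrableOn_ball_of_norm_le_rpow (C := 1) hdim hp
    (ae_of_all _ fun x ↦ by simp [abs_of_nonneg (Real.rpow_nonneg (norm_nonneg x) _)])
    (measurable_norm.pow_const _).aestronglyMeasurable

lemma ae_restrict_ball_max_sub_rpow_le (hdim : 1 ≤ Module.finrank ℝ E) {V : E → ℝ}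
    {s C ε q lam : ℝ} (hC : 0 ≤ C) (hq : 0 ≤ q) (hlam : 0 ≤ lam)
    (hlow : ∀ x : E, 0 < ‖x‖ → ‖x‖ ≤ ε → -C * ‖x‖ ^ (-s) ≤ V x) :
    ∀ᵐ x ∂μ.restrict (ball 0 ε),
      max (lam - V x) 0 ^ q ≤ 2 ^ q * (lam ^ q + C ^ q * ‖x‖ ^ (-(s * q))) := by
  have : Nontrivial E := Module.nontrivial_of_finrank_pos (R := ℝ) hdim
  filter_upwards [self_mem_ae_restrict measurableSet_ball, ae_restrict_of_ae (μ.ae_ne 0)]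
    with x hxε hx0
  exact max_sub_rpow_le_of_neg_mul_rpow_le hlam hC (norm_nonneg x) hq
    (hlow x (norm_pos_iff.2 hx0) (mem_ball_zero_iff.1 hxε).le)

lemma integrableOn_ball_max_sub_rpow_and_integral_le (hdim : 1 ≤ Module.finrank ℝ E)
    {V : E → ℝ} (hV : Measurable V) {s C ε q lam : ℝ} (hC : 0 ≤ C) (hq : 0 ≤ q)
    (hsq : s * q < Module.finrank ℝ E) (hlam : 0 ≤ lam)
    (hlow : ∀ x : E, 0 < ‖x‖ → ‖x‖ ≤ ε → -C * ‖x‖ ^ (-s) ≤ V x) :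
    IntegrableOn (fun x ↦ max (lam - V x) 0 ^ q) (ball 0 ε) μ ∧
      ∫ x in ball 0 ε, max (lam - V x) 0 ^ q ∂μ ≤
        2 ^ q * (lam ^ q * μ.real (ball 0 ε) + C ^ q * ∫ x in ball 0 ε, ‖x‖ ^ (-(s * q)) ∂μ) := by
  have hsing := integrableOn_ball_norm_rpow_neg (μ := μ) hdim hsq ε
  have hdom : IntegrableOn (fun x : E ↦ 2 ^ q * (lam ^ q + C ^ q * ‖x‖ ^ (-(s * q))))
      (ball 0 ε) μ :=
    ((integrableOn_const measure_ball_lt_top.ne).add (hsing.const_mul _)).const_mul _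
  have hle := ae_restrict_ball_max_sub_rpow_le (μ := μ) hdim hC hq hlam hlow
  have hint : IntegrableOn (fun x ↦ max (lam - V x) 0 ^ q) (ball 0 ε) μ := by
    refine hdom.mono' ?_ ?_
    · exact (((measurable_const.sub hV).max measurable_const).pow_const q).aestronglyMeasurable
    · filter_upwards [hle] with x hx
      rwa [Real.norm_of_nonneg (by positivity)]
  refine ⟨hint, (integral_mono_ae hint hdom hle).trans_eq ?_⟩
  rw [integral_const_mul, integral_add (integrableOn_const (C := lam ^ q) measure_ball_lt_top.ne)
    (hsing.const_mul _), integral_const_mul, setIntegral_const, smul_eq_mul, mul_comm (lam ^ q)]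

end NormedSpace

theorem stmt18_general (d : ℕ) (hd : 2 ≤ d) (s C ε : ℝ) (hs : s ∈ Set.Ioo (0 : ℝ) 2)
    (hC : 0 < C)
    (V : EuclideanSpace ℝ (Fin d) → ℝ) (hV : Measurable V)
    (hlow : ∀ x : EuclideanSpace ℝ (Fin d), 0 < ‖x‖ → ‖x‖ ≤ ε →
      V x ≥ -C * ‖x‖ ^ (-s)) :
    ∃ Chat > (0 : ℝ), ∀ lam ≥ (0 : ℝ),
      IntegrableOn (fun x => max (lam - V x) 0 ^ ((d : ℝ) / 2))
        (Metric.ball (0 : EuclideanSpace ℝ (Fin d)) ε) ∧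
      (∫ x in Metric.ball (0 : EuclideanSpace ℝ (Fin d)) ε,
          max (lam - V x) 0 ^ ((d : ℝ) / 2)) ≤ Chat * (1 + lam ^ ((d : ℝ) / 2)) := by
  set q : ℝ := (d : ℝ) / 2
  have hdim : 1 ≤ Module.finrank ℝ (EuclideanSpace ℝ (Fin d)) := by
    rw [finrank_euclideanSpace_fin]; omega
  have hsq : s * q < Module.finrank ℝ (EuclideanSpace ℝ (Fin d)) := by
    rw [finrank_euclideanSpace_fin]
    calc s * q < 2 * q := by gcongr; exact hs.2
      _ = d := by ring
  set vol := volume.real (ball (0 : EuclideanSpace ℝ (Fin d)) ε)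
  set I := ∫ x in ball (0 : EuclideanSpace ℝ (Fin d)) ε, ‖x‖ ^ (-(s * q))
  have hI : 0 ≤ C ^ q * I := mul_nonneg (by positivity) (integral_nonneg fun x ↦ by positivity)
  refine ⟨2 ^ q * (vol + C ^ q * I + 1), by positivity, fun lam hlam ↦ ?_⟩
  obtain ⟨hint, hle⟩ :=
    integrableOn_ball_max_sub_rpow_and_integral_le (μ := volume) hdim hV hC.le (by positivity) hsq hlam hlow
  refine ⟨hint, hle.trans ?_⟩
  have hlamq : 0 ≤ lam ^ q := by positivity
  have hvol : 0 ≤ vol := measureReal_nonneg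
  rw [mul_assoc]
  gcongr
  nlinarith [mul_nonneg hlamq hvol, mul_nonneg hlamq hI]

/-- Section 4.3: a Coulomb-like singularity `-C r^{-s}`, `0 < s < 2`, contributes at
most `Ĉ(1 + λ^{d/2})` to the Weyl integral over a small ball around the origin. -/
theorem stmt18 (d : ℕ) (hd : 2 ≤ d) (s C ε : ℝ) (hs : s ∈ Set.Ioo (0 : ℝ) 2)
    (hC : 0 < C) (hε : 0 < ε)
    (V : EuclideanSpace ℝ (Fin d) → ℝ) (hV : Measurable V)
    (hlow : ∀ x : EuclideanSpace ℝ (Fin d), 0 < ‖x‖ → ‖x‖ ≤ ε →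
      V x ≥ -C * ‖x‖ ^ (-s)) :
    ∃ Chat > (0 : ℝ), ∀ lam ≥ (0 : ℝ),
      IntegrableOn (fun x => max (lam - V x) 0 ^ ((d : ℝ) / 2))
        (Metric.ball (0 : EuclideanSpace ℝ (Fin d)) ε) ∧
      (∫ x in Metric.ball (0 : EuclideanSpace ℝ (Fin d)) ε,
          max (lam - V x) 0 ^ ((d : ℝ) / 2)) ≤ Chat * (1 + lam ^ ((d : ℝ) / 2)) :=
  stmt18_general d hd s C ε hs hC V hV hlow
end

section
/- Let d ≥ 2, let λ ∈ ℝ, R > 0, let ν ≥ 2 be a natural number, and let v : (0,∞) → ℝ be nondecreasing on (0, R]. Let ω_d denote the Lebesgue volume of the unit ball of ℝ^d. Then Σ_{i=2}^{ν} (ω_d·R^d/ν)·(λ - v(((i-1)/ν)^{1/d}·R))₊^{d/2} ≤ (ω_d·R^d/ν)·λ₊^{d/2} + ∫_{{x : ‖x‖ < R}} (λ - v(‖x‖))₊^{d/2} dx. -/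
open MeasureTheory

/-- The Riemann-sum comparison from the proof of Proposition 5.4: for `v` nondecreasing
on `(0, R]`, the sum over the annuli `D_i` of `|D_i| (λ - v(((i-1)/ν)^{1/d} R))₊^{d/2}`
is bounded by `|D_i| λ₊^{d/2} + ∫_{B(0,R)} (λ - v(‖x‖))₊^{d/2} dx`. -/
theorem stmt19 (d : ℕ) (hd : 2 ≤ d) (lam R : ℝ) (hR : 0 < R) (ν : ℕ) (hν : 2 ≤ ν)
    (v : ℝ → ℝ) (hmono : MonotoneOn v (Set.Ioc 0 R)) :
    ∑ i ∈ Finset.Icc 2 ν,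
        ENNReal.ofReal
          (((volume (Metric.ball (0 : EuclideanSpace ℝ (Fin d)) 1)).toReal * R ^ d / ν) *
            max (lam - v ((((i : ℝ) - 1) / ν) ^ ((1 : ℝ) / d) * R)) 0 ^ ((d : ℝ) / 2)) ≤
      ENNReal.ofReal
          (((volume (Metric.ball (0 : EuclideanSpace ℝ (Fin d)) 1)).toReal * R ^ d / ν) *
            max lam 0 ^ ((d : ℝ) / 2)) +
        ∫⁻ x in Metric.ball (0 : EuclideanSpace ℝ (Fin d)) R,
          ENNReal.ofReal (max (lam - v ‖x‖) 0 ^ ((d : ℝ) / 2)) := by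
  classical
  set E := EuclideanSpace ℝ (Fin d) with hE
  have hd0 : (0:ℝ) < d := by positivity
  have hν0 : (0:ℝ) < ν := by positivity
  set ω : ENNReal := volume (Metric.ball (0 : E) 1) with hω
  have hωfin : ω ≠ ⊤ := (measure_ball_lt_top).ne
  set ρ : ℝ → ℝ := fun t => (t / ν) ^ ((1:ℝ)/d) * R with hρ
  have hρ_nonneg : ∀ t, 0 ≤ t → 0 ≤ ρ t := fun t ht => by
    have : (0:ℝ) ≤ (t / ν) ^ ((1:ℝ)/d) := Real.rpow_nonneg (by positivity) _
    exact mul_nonneg this hR.le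
  have hρ_mono : ∀ s t : ℝ, 0 ≤ s → s ≤ t → ρ s ≤ ρ t := fun s t hs hst => by
    have : (s / ν) ^ ((1:ℝ)/d) ≤ (t / ν) ^ ((1:ℝ)/d) :=
      Real.rpow_le_rpow (by positivity) (by gcongr) (by positivity)
    exact mul_le_mul_of_nonneg_right this hR.le
  have hρ_pow : ∀ t : ℝ, 0 ≤ t → ρ t ^ d = t / ν * R ^ d := fun t ht => by
    have hb : (0:ℝ) ≤ t / ν := by positivity
    rw [hρ]
    rw [mul_pow, ← Real.rpow_natCast ((t / ν) ^ ((1:ℝ)/d)) d, ← Real.rpow_mul hb,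
      one_div, inv_mul_cancel₀ (by positivity : (d:ℝ) ≠ 0), Real.rpow_one]
  have hρ_lt_R : ∀ t : ℝ, 0 ≤ t → t < ν → ρ t < R := fun t ht htν => by
    have : (t / ν) ^ ((1:ℝ)/d) < 1 :=
      Real.rpow_lt_one (by positivity) (by rw [div_lt_one hν0]; exact htν) (by positivity)
    calc ρ t < 1 * R := by rw [hρ]; exact mul_lt_mul_of_pos_right this hR
    _ = R := one_mul R
  -- the annuli
  set A : ℕ → Set E := fun i =>
    Metric.closedBall 0 (ρ ((i:ℝ) - 1)) \ Metric.closedBall 0 (ρ ((i:ℝ) - 2)) with hA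
  have hAmeas : ∀ i, MeasurableSet (A i) := fun i =>
    (measurableSet_closedBall).diff measurableSet_closedBall
  -- volume of each annulus
  have hfinrank : Module.finrank ℝ E = d := finrank_euclideanSpace_fin
  have hcb : ∀ r : ℝ, 0 ≤ r →
      volume (Metric.closedBall (0:E) r) = ENNReal.ofReal (r ^ d) * ω := fun r hr => by
    rw [hω, Measure.addHaar_closedBall _ _ hr, hfinrank]
  have hAvol : ∀ i ∈ Finset.Icc 2 ν, volume (A i) = ENNReal.ofReal (R ^ d / ν) * ω := by
    intro i hi
    rw [Finset.mem_Icc] at hi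
    have h2i : (2:ℝ) ≤ (i:ℝ) := by exact_mod_cast hi.1
    have h1 : (0:ℝ) ≤ (i:ℝ) - 2 := by linarith
    have h2 : (0:ℝ) ≤ (i:ℝ) - 1 := by linarith
    have hsub : Metric.closedBall (0:E) (ρ ((i:ℝ) - 2)) ⊆
        Metric.closedBall 0 (ρ ((i:ℝ) - 1)) :=
      Metric.closedBall_subset_closedBall (hρ_mono _ _ h1 (by linarith))
    rw [hA]
    rw [measure_diff hsub measurableSet_closedBall.nullMeasurableSet
        (measure_closedBall_lt_top).ne, hcb _ (hρ_nonneg _ h2), hcb _ (hρ_nonneg _ h1),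
      hρ_pow _ h2, hρ_pow _ h1, ← ENNReal.sub_mul (fun _ _ => hωfin),
      ← ENNReal.ofReal_sub _ (by positivity)]
    congr 2
    field_simp
    ring
  -- pointwise bound on each annulus
  have hpt : ∀ i ∈ Finset.Icc 2 ν, ∀ x ∈ A i,
      ENNReal.ofReal (max (lam - v (ρ ((i:ℝ) - 1))) 0 ^ ((d : ℝ) / 2)) ≤
      ENNReal.ofReal (max (lam - v ‖x‖) 0 ^ ((d : ℝ) / 2)) := by
    intro i hi x hx
    rw [Finset.mem_Icc] at hi
    have h2i : (2:ℝ) ≤ (i:ℝ) := by exact_mod_cast hi.1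
    have hiν : (i:ℝ) ≤ (ν:ℝ) := by exact_mod_cast hi.2
    obtain ⟨hx1, hx2⟩ := hx
    rw [Metric.mem_closedBall, dist_zero_right] at hx1
    rw [Metric.mem_closedBall, dist_zero_right, not_le] at hx2
    have hxpos : 0 < ‖x‖ := lt_of_le_of_lt (hρ_nonneg _ (by linarith)) hx2
    have hρ1_pos : 0 < ρ ((i:ℝ) - 1) := lt_of_lt_of_le hxpos hx1
    have hρ1_le : ρ ((i:ℝ) - 1) ≤ R := by
      have := hρ_lt_R ((i:ℝ) - 1) (by linarith) (by linarith)
      linarith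
    have hv : v ‖x‖ ≤ v (ρ ((i:ℝ) - 1)) :=
      hmono ⟨hxpos, le_trans hx1 hρ1_le⟩ ⟨hρ1_pos, hρ1_le⟩ hx1
    apply ENNReal.ofReal_le_ofReal
    apply Real.rpow_le_rpow (le_max_right _ _) _ (by positivity)
    exact max_le_max (by linarith) le_rfl
  -- disjointness
  have hkey : ∀ i j : ℕ, 2 ≤ i → i < j → Disjoint (A i) (A j) := by
    intro i j hi2 hij
    have h2i : (2:ℝ) ≤ (i:ℝ) := by exact_mod_cast hi2
    have hij' : (i:ℝ) + 1 ≤ (j:ℝ) := by exact_mod_cast hij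
    have hk : ρ ((i:ℝ) - 1) ≤ ρ ((j:ℝ) - 2) := hρ_mono _ _ (by linarith) (by linarith)
    apply Set.disjoint_left.mpr
    intro x hxi hxj
    exact hxj.2 (Metric.closedBall_subset_closedBall hk hxi.1)
  have hdisj : (Finset.Icc 2 ν : Set ℕ).PairwiseDisjoint A := by
    intro i hi j hj hij
    simp only [Finset.coe_Icc, Set.mem_Icc] at hi hj
    rcases lt_or_gt_of_ne hij with h | h
    · exact hkey i j hi.1 h
    · exact (hkey j i hj.1 h).symm
  -- union inside ball R
  have hsub : (⋃ i ∈ Finset.Icc 2 ν, A i) ⊆ Metric.ball (0:E) R := by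
    intro x hx
    simp only [Set.mem_iUnion] at hx
    obtain ⟨i, hi, hx⟩ := hx
    rw [Finset.mem_Icc] at hi
    have h2i : (2:ℝ) ≤ (i:ℝ) := by exact_mod_cast hi.1
    have hiν : (i:ℝ) ≤ (ν:ℝ) := by exact_mod_cast hi.2
    obtain ⟨hx1, -⟩ := hx
    rw [Metric.mem_closedBall, dist_zero_right] at hx1
    rw [Metric.mem_ball, dist_zero_right]
    exact lt_of_le_of_lt hx1 (hρ_lt_R _ (by linarith) (by linarith))
  -- main chain
  have hmain : ∑ i ∈ Finset.Icc 2 ν,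
      ENNReal.ofReal ((ω.toReal * R ^ d / ν) *
        max (lam - v (ρ ((i:ℝ) - 1))) 0 ^ ((d : ℝ) / 2)) ≤
      ∫⁻ x in Metric.ball (0 : E) R,
        ENNReal.ofReal (max (lam - v ‖x‖) 0 ^ ((d : ℝ) / 2)) := by
    calc ∑ i ∈ Finset.Icc 2 ν,
        ENNReal.ofReal ((ω.toReal * R ^ d / ν) *
          max (lam - v (ρ ((i:ℝ) - 1))) 0 ^ ((d : ℝ) / 2))
        = ∑ i ∈ Finset.Icc 2 ν, ∫⁻ _ in A i,
            ENNReal.ofReal (max (lam - v (ρ ((i:ℝ) - 1))) 0 ^ ((d : ℝ) / 2)) ∂volume := by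
          apply Finset.sum_congr rfl
          intro i hi
          have hc : ENNReal.ofReal (ω.toReal * R ^ d / ν) = ENNReal.ofReal (R ^ d / ν) * ω := by
            rw [show ω.toReal * R ^ d / ν = (R ^ d / ν) * ω.toReal by ring,
              ENNReal.ofReal_mul (by positivity), ENNReal.ofReal_toReal hωfin]
          rw [setLIntegral_const, hAvol i hi,
            ENNReal.ofReal_mul (by positivity : (0:ℝ) ≤ ω.toReal * R ^ d / ν), hc, mul_comm]
      _ ≤ ∑ i ∈ Finset.Icc 2 ν, ∫⁻ x in A i,
            ENNReal.ofReal (max (lam - v ‖x‖) 0 ^ ((d : ℝ) / 2)) ∂volume := by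
          apply Finset.sum_le_sum
          intro i hi
          exact setLIntegral_mono' (hAmeas i) (hpt i hi)
      _ = ∫⁻ x in ⋃ i ∈ Finset.Icc 2 ν, A i,
            ENNReal.ofReal (max (lam - v ‖x‖) 0 ^ ((d : ℝ) / 2)) ∂volume := by
          rw [lintegral_biUnion_finset hdisj (fun i _ => hAmeas i)]
      _ ≤ _ := lintegral_mono_set hsub
  calc ∑ i ∈ Finset.Icc 2 ν,
      ENNReal.ofReal ((ω.toReal * R ^ d / ν) *
        max (lam - v ((((i : ℝ) - 1) / ν) ^ ((1 : ℝ) / d) * R)) 0 ^ ((d : ℝ) / 2))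
      ≤ ∫⁻ x in Metric.ball (0 : E) R,
          ENNReal.ofReal (max (lam - v ‖x‖) 0 ^ ((d : ℝ) / 2)) := hmain
    _ ≤ _ := le_add_self
end
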